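/- Let O be any assignment and N a pure Nash equilibrium of the game induced by CCOORD with integer parameter p ≥ 1 such that Φ(N)^{1/(p+1)} ≤ γ·Φ(O)^{1/(p+1)} for some γ ≥ 0. Then the maximum completion time of any job in N is at most (γ(p+1)m^{1/(p+1)} + p)·max_j L(O_j). -/

import Mathlib

/-- Complete homogeneous sum: sum of all monomials of total degree `k` (with
repetition) in the elements of the list. -/
noncomputable def hcomp : List ℝ → ℕ → ℝ
  | _, 0 => 1
  | [], _ + 1 => 0
  | a :: l, k + 1 => a * hcomp (a :: l) k + hcomp l (k + 1)
  termination_by l k => (l.length, k)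

/-- `Ψ_k(A)`: `k!` times the sum of all monomials of total degree `k` in the
elements of `A`. -/
noncomputable def Psi (k : ℕ) (A : List ℝ) : ℝ := (k.factorial : ℝ) * hcomp A k

/-- The minimum load of job `i` over all machines. -/
noncomputable def wmin {n m : ℕ} (w : Fin n → Fin m → ℝ) (i : Fin n) : ℝ :=
  sInf (Set.range (w i))

/-- The inefficiency of job `i` on machine `j`. -/
noncomputable def rho {n m : ℕ} (w : Fin n → Fin m → ℝ) (i : Fin n) (j : Fin m) : ℝ :=
  w i j / wmin w i

/-- The load of machine `j` under assignment `N`. -/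
noncomputable def load {n m : ℕ} (w : Fin n → Fin m → ℝ) (N : Fin n → Fin m) (j : Fin m) : ℝ :=
  ∑ i ∈ Finset.univ.filter (fun i => N i = j), w i j

/-- The multiset (as a list) of loads of the jobs assigned to machine `j` under `N`. -/
noncomputable def mlist {n m : ℕ} (w : Fin n → Fin m → ℝ) (N : Fin n → Fin m)
    (j : Fin m) : List ℝ :=
  ((List.finRange n).filter (fun i => N i = j)).map (fun i => w i j)

/-- The completion time of job `i` under assignment `N` with the CCOORD mechanism. -/
noncomputable def Ccost {n m : ℕ} (p : ℕ) (w : Fin n → Fin m → ℝ)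
    (N : Fin n → Fin m) (i : Fin n) : ℝ :=
  (rho w i (N i) * Psi p (mlist w N (N i))) ^ ((1 : ℝ) / p)

/-- `N` is a pure Nash equilibrium of the game induced by CCOORD. -/
def isNashC {n m : ℕ} (p : ℕ) (w : Fin n → Fin m → ℝ) (N : Fin n → Fin m) : Prop :=
  ∀ (i : Fin n) (j : Fin m), Ccost p w N i ≤ Ccost p w (Function.update N i j) i

/-- The potential function `Φ`. -/
noncomputable def Phi {n m : ℕ} (p : ℕ) (w : Fin n → Fin m → ℝ)
    (N : Fin n → Fin m) : ℝ :=
  ∑ j, Psi (p + 1) (mlist w N j)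

/-!
Let job `i` deviate to a machine `j` where its load `x = w i j` is minimal, so that `ρ_{ij} = 1`,
and let `L` be the other loads on `j`. The Nash condition gives
`C_i ≤ Ψ_p(L ∪ {x})^(1/p) ≤ Ψ_{p+1}(L)^(1/(p+1)) + p x ≤ Φ(N)^(1/(p+1)) + p x`.
The middle step rests on the log-convexity of `k ↦ Ψ_k(L)`, a Newton-type inequality for complete
homogeneous sums, which makes `Ψ_k(L)^(1/k)` nondecreasing in `k`. Finally
`Φ(O) ≤ m ((p + 1) max_j L(O_j))^(p+1)` and `x ≤ w_{i,O(i)} ≤ max_j L(O_j)`.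
-/

open Finset

@[simp] lemma hcomp_zero (l : List ℝ) : hcomp l 0 = 1 := by
  cases l <;> rw [hcomp]

@[simp] lemma hcomp_nil_succ (k : ℕ) : hcomp [] (k + 1) = 0 := by
  rw [hcomp]

lemma hcomp_cons_succ (a : ℝ) (l : List ℝ) (k : ℕ) :
    hcomp (a :: l) (k + 1) = a * hcomp (a :: l) k + hcomp l (k + 1) := by
  rw [hcomp]

lemma hcomp_nonneg {l : List ℝ} (hl : ∀ x ∈ l, 0 ≤ x) (k : ℕ) : 0 ≤ hcomp l k := by
  induction l generalizing k with
  | nil => cases k <;> simp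
  | cons a l ih =>
    rw [List.forall_mem_cons] at hl
    induction k with
    | zero => simp
    | succ k ihk =>
      rw [hcomp_cons_succ]
      have := ih hl.2 (k + 1)
      have := hl.1
      positivity

lemma hcomp_pos {l : List ℝ} (hne : l ≠ []) (hl : ∀ x ∈ l, 0 < x) (k : ℕ) : 0 < hcomp l k := by
  obtain ⟨a, l, rfl⟩ := List.exists_cons_of_ne_nil hne
  rw [List.forall_mem_cons] at hl
  induction k with
  | zero => simp
  | succ k ihk =>
    rw [hcomp_cons_succ]
    have := hcomp_nonneg (fun x hx => (hl.2 x hx).le) (k + 1)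
    have := hl.1
    positivity

lemma hcomp_singleton (a : ℝ) (k : ℕ) : hcomp [a] k = a ^ k := by
  induction k with
  | zero => simp
  | succ k ih => rw [hcomp_cons_succ, ih, pow_succ]; simp [mul_comm]

lemma hcomp_le_sum_pow {l : List ℝ} (hl : ∀ x ∈ l, 0 ≤ x) (k : ℕ) : hcomp l k ≤ l.sum ^ k := by
  induction l generalizing k with
  | nil => cases k <;> simp
  | cons a l ih =>
    rw [List.forall_mem_cons] at hl
    have hs : 0 ≤ l.sum := List.sum_nonneg hl.2
    induction k with
    | zero => simp
    | succ k ihk =>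
      calc hcomp (a :: l) (k + 1) = a * hcomp (a :: l) k + hcomp l (k + 1) := hcomp_cons_succ ..
        _ ≤ a * (a + l.sum) ^ k + l.sum * l.sum ^ k := by
          gcongr
          · exact hl.1
          · simpa using ihk
          · simpa [pow_succ'] using ih hl.2 (k + 1)
        _ ≤ a * (a + l.sum) ^ k + l.sum * (a + l.sum) ^ k := by
          gcongr; linarith [hl.1]
        _ = (a :: l).sum ^ (k + 1) := by rw [List.sum_cons]; ring

lemma hcomp_append_cons (L₁ : List ℝ) (x : ℝ) (L₂ : List ℝ) (k : ℕ) :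
    hcomp (L₁ ++ x :: L₂) k =
      ∑ ts ∈ antidiagonal k, x ^ ts.1 * hcomp (L₁ ++ L₂) ts.2 := by
  induction L₁ generalizing k with
  | nil =>
    induction k with
    | zero => simp
    | succ k ih =>
      simp only [List.nil_append] at ih ⊢
      rw [hcomp_cons_succ, ih, Nat.sum_antidiagonal_succ, mul_sum, add_comm]
      simp only [pow_zero, one_mul, pow_succ]
      congr 1
      exact sum_congr rfl fun ts _ => by ring
  | cons y L₁ ih =>
    induction k with
    | zero => simp
    | succ k ihk =>
      simp only [List.cons_append] at ihk ⊢
      rw [hcomp_cons_succ, ihk, ih, Nat.sum_antidiagonal_succ', Nat.sum_antidiagonal_succ']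
      simp only [hcomp_zero, hcomp_cons_succ, mul_add, mul_sum, sum_add_distrib]
      ring_nf

lemma hcomp_cons_mul_le {a : ℝ} (ha : 0 ≤ a) {l : List ℝ} (hl : ∀ x ∈ l, 0 < x)
    (hlc : ∀ k, hcomp l k * hcomp l (k + 2) ≤ hcomp l (k + 1) ^ 2) (k : ℕ) :
    hcomp (a :: l) k * hcomp l (k + 2) ≤ hcomp (a :: l) (k + 1) * hcomp l (k + 1) := by
  rcases eq_or_ne l [] with rfl | hne
  · simp
  have hl' : ∀ x ∈ l, 0 ≤ x := fun x hx => (hl x hx).le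
  induction k with
  | zero =>
    have := hlc 0
    have := hcomp_nonneg hl' 1
    simp only [hcomp_zero, zero_add, hcomp_cons_succ] at *
    nlinarith
  | succ k ih =>
    have hb₁ := hcomp_pos hne hl (k + 1)
    have hb₂ := hcomp_nonneg hl' (k + 2)
    have hg₀ := hcomp_nonneg (List.forall_mem_cons.2 ⟨ha, hl'⟩) k
    have key : hcomp (a :: l) k * hcomp l (k + 3) ≤ hcomp (a :: l) (k + 1) * hcomp l (k + 2) := by
      refine le_of_mul_le_mul_right ?_ hb₁
      calc hcomp (a :: l) k * hcomp l (k + 3) * hcomp l (k + 1)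
          = hcomp (a :: l) k * (hcomp l (k + 1) * hcomp l (k + 3)) := by ring
        _ ≤ hcomp (a :: l) k * hcomp l (k + 2) ^ 2 := by gcongr; exact hlc (k + 1)
        _ = hcomp (a :: l) k * hcomp l (k + 2) * hcomp l (k + 2) := by ring
        _ ≤ hcomp (a :: l) (k + 1) * hcomp l (k + 1) * hcomp l (k + 2) := by gcongr
        _ = hcomp (a :: l) (k + 1) * hcomp l (k + 2) * hcomp l (k + 1) := by ring
    calc hcomp (a :: l) (k + 1) * hcomp l (k + 1 + 2)
        = a * (hcomp (a :: l) k * hcomp l (k + 3)) + hcomp l (k + 1) * hcomp l (k + 3) := by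
          rw [hcomp_cons_succ a l k]; ring
      _ ≤ a * (hcomp (a :: l) (k + 1) * hcomp l (k + 2)) + hcomp l (k + 2) ^ 2 := by
          gcongr; exact hlc (k + 1)
      _ = hcomp (a :: l) (k + 1 + 1) * hcomp l (k + 1 + 1) := by
          rw [hcomp_cons_succ a l (k + 1)]; ring

lemma hcomp_mul_le_sq {l : List ℝ} (hl : ∀ x ∈ l, 0 < x) (k : ℕ) :
    hcomp l k * hcomp l (k + 2) ≤ hcomp l (k + 1) ^ 2 := by
  induction l generalizing k with
  | nil => simp
  | cons a l ih =>
    rw [List.forall_mem_cons] at hl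
    have hcross := hcomp_cons_mul_le hl.1.le hl.2 (ih hl.2) k
    calc hcomp (a :: l) k * hcomp (a :: l) (k + 2)
        = a * hcomp (a :: l) k * hcomp (a :: l) (k + 1) + hcomp (a :: l) k * hcomp l (k + 2) := by
          rw [hcomp_cons_succ a l (k + 1)]; ring
      _ ≤ a * hcomp (a :: l) k * hcomp (a :: l) (k + 1) + hcomp (a :: l) (k + 1) * hcomp l (k + 1) := by
          gcongr
      _ = hcomp (a :: l) (k + 1) * (a * hcomp (a :: l) k + hcomp l (k + 1)) := by ring
      _ = hcomp (a :: l) (k + 1) ^ 2 := by rw [← hcomp_cons_succ, sq]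

/-- One step `g_{k+1} = a g_k + b_{k+1}` of the recursion for `hcomp (a :: l)` propagates the
Newton-type inequality from `k` to `k + 1`. -/
lemma newton_cons_step {a c g₀ g₁ g₂ g₃ b₁ b₂ b₃ : ℝ} (ha : 0 < a) (hc : 0 ≤ c) (hg₀ : 0 ≤ g₀)
    (hb₁ : 0 < b₁) (hb₂ : 0 ≤ b₂) (h₁ : g₁ = a * g₀ + b₁) (h₂ : g₂ = a * g₁ + b₂)
    (h₃ : g₃ = a * g₂ + b₃) (hcross : g₀ * b₂ ≤ g₁ * b₁)
    (hg : (c + 1) * g₁ ^ 2 ≤ (c + 2) * (g₀ * g₂)) (hb : (c + 2) * b₂ ^ 2 ≤ (c + 3) * (b₁ * b₃)) :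
    (c + 2) * g₂ ^ 2 ≤ (c + 3) * (g₁ * g₃) := by
  subst h₁ h₂ h₃
  have hg' : 0 ≤ a * g₀ * (a * g₀ + b₁) + (c + 2) * (g₀ * b₂) - (c + 1) * ((a * g₀ + b₁) * b₁) := by
    nlinarith
  have t₁ := mul_nonneg (by positivity : 0 ≤ (c + 2) * b₁) (sub_nonneg.2 hb)
  have t₂ := mul_nonneg (by positivity : 0 ≤ a * (c + 2) * g₀) (sub_nonneg.2 hb)
  have t₃ := mul_nonneg (by positivity : 0 ≤ a * (c + 2) * b₂) hg'
  have t₄ := mul_nonneg (by positivity : 0 ≤ a ^ 2 * (c + 2) * (a * g₀ + b₁)) (sub_nonneg.2 hcross)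
  have hcb : 0 < (c + 2) * b₁ := by positivity
  -- multiplied by `(c + 2) b₁ > 0`, the goal is a nonnegative combination of `t₁, …, t₄`
  nlinarith

lemma hcomp_sq_le_mul {l : List ℝ} (hl : ∀ x ∈ l, 0 < x) (k : ℕ) :
    ((k : ℝ) + 1) * hcomp l (k + 1) ^ 2 ≤ ((k : ℝ) + 2) * (hcomp l k * hcomp l (k + 2)) := by
  induction l generalizing k with
  | nil => simp
  | cons a l ih =>
    rw [List.forall_mem_cons] at hl
    obtain ⟨ha, hl⟩ := hl
    rcases eq_or_ne l [] with rfl | hne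
    · rw [hcomp_singleton, hcomp_singleton, hcomp_singleton,
        show (a ^ (k + 1)) ^ 2 = a ^ k * a ^ (k + 2) by ring]
      gcongr
      linarith
    have hl' : ∀ x ∈ l, 0 ≤ x := fun x hx => (hl x hx).le
    induction k with
    | zero =>
      have := ih hl 0
      have := hcomp_nonneg hl' 2
      simp only [hcomp_cons_succ, hcomp_zero, Nat.cast_zero, zero_add] at *
      nlinarith
    | succ k ihk =>
      have hb := ih hl (k + 1)
      push_cast at hb ⊢
      have := newton_cons_step ha k.cast_nonneg
        (hcomp_nonneg (List.forall_mem_cons.2 ⟨ha.le, hl'⟩) k) (hcomp_pos hne hl (k + 1))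
        (hcomp_nonneg hl' (k + 2)) (hcomp_cons_succ a l k) (hcomp_cons_succ a l (k + 1))
        (hcomp_cons_succ a l (k + 2)) (hcomp_cons_mul_le ha.le hl (hcomp_mul_le_sq hl) k) ihk
        (by linarith)
      linarith

lemma pow_succ_le_pow_of_sq_le_mul {u : ℕ → ℝ} (hu : ∀ k, 0 < u k) (h₀ : u 0 = 1)
    (hu₂ : ∀ k, u (k + 1) ^ 2 ≤ u k * u (k + 2)) (k : ℕ) : u k ^ (k + 1) ≤ u (k + 1) ^ k := by
  induction k with
  | zero => simp [h₀]
  | succ k ih =>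
    refine le_of_mul_le_mul_left ?_ (pow_pos (hu (k + 1)) k)
    calc u (k + 1) ^ k * u (k + 1) ^ (k + 1 + 1) = (u (k + 1) ^ 2) ^ (k + 1) := by ring
      _ ≤ (u k * u (k + 2)) ^ (k + 1) := by gcongr; exact hu₂ k
      _ = u k ^ (k + 1) * u (k + 2) ^ (k + 1) := mul_pow ..
      _ ≤ u (k + 1) ^ k * u (k + 1 + 1) ^ (k + 1) :=
        mul_le_mul_of_nonneg_right ih (pow_nonneg (hu _).le _)

lemma pow_le_pow_of_sq_le_mul {u : ℕ → ℝ} (hu : ∀ k, 0 < u k) (h₀ : u 0 = 1)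
    (hu₂ : ∀ k, u (k + 1) ^ 2 ≤ u k * u (k + 2)) {j K : ℕ} (hjK : j ≤ K) :
    u j ^ K ≤ u K ^ j := by
  induction K, hjK using Nat.le_induction with
  | base => rfl
  | succ K hjK ih =>
    rcases Nat.eq_zero_or_pos K with rfl | hK
    · simp [Nat.le_zero.1 hjK, h₀]
    refine le_of_pow_le_pow_left₀ hK.ne' (pow_nonneg (hu _).le _) ?_
    calc (u j ^ (K + 1)) ^ K = (u j ^ K) ^ (K + 1) := by ring
      _ ≤ (u K ^ j) ^ (K + 1) := pow_le_pow_left₀ (pow_nonneg (hu j).le K) ih _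
      _ = (u K ^ (K + 1)) ^ j := by ring
      _ ≤ (u (K + 1) ^ K) ^ j :=
        pow_le_pow_left₀ (pow_nonneg (hu K).le _) (pow_succ_le_pow_of_sq_le_mul hu h₀ hu₂ K) j
      _ = (u (K + 1) ^ j) ^ K := by ring

lemma Psi_nonneg (k : ℕ) {l : List ℝ} (hl : ∀ x ∈ l, 0 ≤ x) : 0 ≤ Psi k l :=
  mul_nonneg (Nat.cast_nonneg _) (hcomp_nonneg hl k)

lemma Psi_pos (k : ℕ) {l : List ℝ} (hne : l ≠ []) (hl : ∀ x ∈ l, 0 < x) : 0 < Psi k l :=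
  mul_pos (Nat.cast_pos.2 k.factorial_pos) (hcomp_pos hne hl k)

lemma Psi_le_mul_sum_pow (k : ℕ) {l : List ℝ} (hl : ∀ x ∈ l, 0 ≤ x) :
    Psi k l ≤ (k * l.sum) ^ k := by
  have hfac : (k.factorial : ℝ) ≤ (k : ℝ) ^ k := by exact_mod_cast k.factorial_le_pow
  calc Psi k l ≤ (k : ℝ) ^ k * l.sum ^ k := by
        unfold Psi
        gcongr
        exacts [hcomp_nonneg hl k, hcomp_le_sum_pow hl k]
    _ = (k * l.sum) ^ k := (mul_pow ..).symm

lemma Psi_sq_le_mul {l : List ℝ} (hl : ∀ x ∈ l, 0 < x) (k : ℕ) :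
    Psi (k + 1) l ^ 2 ≤ Psi k l * Psi (k + 2) l := by
  have hc : (0 : ℝ) ≤ ((k : ℝ) + 1) * (k.factorial : ℝ) ^ 2 := by positivity
  calc Psi (k + 1) l ^ 2
      = ((k + 1) * (k.factorial : ℝ) ^ 2) * ((k + 1) * hcomp l (k + 1) ^ 2) := by
        simp only [Psi, Nat.factorial_succ]; push_cast; ring
    _ ≤ ((k + 1) * (k.factorial : ℝ) ^ 2) * ((k + 2) * (hcomp l k * hcomp l (k + 2))) :=
        mul_le_mul_of_nonneg_left (hcomp_sq_le_mul hl k) hc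
    _ = Psi k l * Psi (k + 2) l := by
        simp only [Psi, Nat.factorial_succ]; push_cast; ring

lemma Psi_le_rpow_pow {l : List ℝ} (hl : ∀ x ∈ l, 0 < x) {j K : ℕ} (hjK : j ≤ K) (hK : K ≠ 0) :
    Psi j l ≤ (Psi K l ^ ((1 : ℝ) / K)) ^ j := by
  have hl' : ∀ x ∈ l, 0 ≤ x := fun x hx => (hl x hx).le
  rcases eq_or_ne l [] with rfl | hne
  · rcases j with _ | j
    · simp [Psi]
    · simp only [Psi, hcomp_nil_succ, mul_zero]
      exact pow_nonneg (Real.rpow_nonneg (Psi_nonneg K hl') _) _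
  rw [Real.rpow_pow_comm (Psi_nonneg K hl'), one_div,
    Real.le_rpow_inv_iff_of_pos (Psi_nonneg j hl') (pow_nonneg (Psi_nonneg K hl') j)
      (Nat.cast_pos.2 (Nat.pos_of_ne_zero hK)), Real.rpow_natCast]
  exact pow_le_pow_of_sq_le_mul (fun k => Psi_pos k hne hl) (by simp [Psi]) (Psi_sq_le_mul hl) hjK

lemma Psi_le_Psi_append_cons (k : ℕ) {x : ℝ} (hx : 0 ≤ x) {L₁ L₂ : List ℝ}
    (hL : ∀ y ∈ L₁ ++ L₂, 0 ≤ y) : Psi k (L₁ ++ L₂) ≤ Psi k (L₁ ++ x :: L₂) := by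
  unfold Psi
  rw [hcomp_append_cons]
  gcongr
  have h0 : ((0, k) : ℕ × ℕ) ∈ antidiagonal k := by simp
  calc hcomp (L₁ ++ L₂) k = x ^ (0, k).1 * hcomp (L₁ ++ L₂) (0, k).2 := by simp
    _ ≤ _ := single_le_sum (fun ts _ => mul_nonneg (pow_nonneg hx _) (hcomp_nonneg hL _)) h0

/-- Expanding `Ψ_p(L ∪ {x})` in powers of `x`, each `Ψ_s(L)` is at most `S^s` with
`S = Ψ_{p+1}(L)^(1/(p+1))` (by `Psi_le_rpow_pow`), and the coefficients `p! / s! ≤ C(p, t) p^t`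
assemble into the binomial expansion of `(S + p x)^p`. -/
lemma Psi_append_cons_le (p : ℕ) {x : ℝ} (hx : 0 ≤ x) {L₁ L₂ : List ℝ}
    (hL : ∀ y ∈ L₁ ++ L₂, 0 < y) :
    Psi p (L₁ ++ x :: L₂) ≤ (Psi (p + 1) (L₁ ++ L₂) ^ ((1 : ℝ) / (p + 1)) + p * x) ^ p := by
  set S := Psi (p + 1) (L₁ ++ L₂) ^ ((1 : ℝ) / (p + 1))
  have hPsi : ∀ s ≤ p, Psi s (L₁ ++ L₂) ≤ S ^ s := fun s hs => by
    simpa only [Nat.cast_succ] using Psi_le_rpow_pow hL (Nat.le_succ_of_le hs) p.succ_ne_zero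
  have hterm : ∀ ts ∈ antidiagonal p, (p.factorial : ℝ) * (x ^ ts.1 * hcomp (L₁ ++ L₂) ts.2) ≤
      p.choose ts.1 • ((p * x) ^ ts.1 * S ^ ts.2) := by
    rintro ⟨t, s⟩ hts
    rw [HasAntidiagonal.mem_antidiagonal] at hts
    subst hts
    have hfac : ((t + s).factorial : ℝ) = (t + s).choose t * t.factorial * s.factorial := by
      rw [Nat.choose_symm_add]; exact_mod_cast (Nat.add_choose_mul_factorial_mul_factorial t s).symm
    have ht : (t.factorial : ℝ) ≤ ((t + s : ℕ) : ℝ) ^ t := by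
      exact_mod_cast t.factorial_le_pow.trans (Nat.pow_le_pow_left (Nat.le_add_right t s) t)
    have hs : Psi s (L₁ ++ L₂) ≤ S ^ s := hPsi s (Nat.le_add_left s t)
    rw [nsmul_eq_mul, hfac, mul_pow]
    calc (t + s).choose t * t.factorial * s.factorial * (x ^ t * hcomp (L₁ ++ L₂) s)
        = (t + s).choose t * t.factorial * x ^ t * Psi s (L₁ ++ L₂) := by unfold Psi; ring
      _ ≤ (t + s).choose t * ((t + s : ℕ) : ℝ) ^ t * x ^ t * S ^ s := by
        gcongr
        exact Psi_nonneg s fun y hy => (hL y hy).le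
      _ = _ := by ring
  calc Psi p (L₁ ++ x :: L₂)
      = ∑ ts ∈ antidiagonal p, (p.factorial : ℝ) * (x ^ ts.1 * hcomp (L₁ ++ L₂) ts.2) := by
        rw [Psi, hcomp_append_cons, mul_sum]
    _ ≤ ∑ ts ∈ antidiagonal p, p.choose ts.1 • ((p * x) ^ ts.1 * S ^ ts.2) := sum_le_sum hterm
    _ = (S + p * x) ^ p := by rw [add_comm, (Commute.all _ _).add_pow']

lemma exists_mlist_update {n m : ℕ} (w : Fin n → Fin m → ℝ) (N : Fin n → Fin m) (i : Fin n)
    (j : Fin m) :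
    ∃ L₁ L₂ : List ℝ, mlist w (Function.update N i j) j = L₁ ++ w i j :: L₂ ∧
      mlist w N j = (if N i = j then L₁ ++ w i j :: L₂ else L₁ ++ L₂) ∧
      ∀ y ∈ L₁ ++ L₂, ∃ i', y = w i' j := by
  obtain ⟨A, B, hAB⟩ := List.append_of_mem (List.mem_finRange i)
  have hnd := List.nodup_append.1 (hAB ▸ List.nodup_finRange n)
  have hfilter : ∀ C : List (Fin n), i ∉ C →
      C.filter (fun i' => Function.update N i j i' = j) = C.filter (fun i' => N i' = j) :=
    fun C hC => List.filter_congr fun x hx => by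
      simp [Function.update_of_ne (ne_of_mem_of_not_mem hx hC)]
  have hiA : i ∉ A := fun h => hnd.2.2 i h i List.mem_cons_self rfl
  have hiB : i ∉ B := (List.nodup_cons.1 hnd.2.1).1
  refine ⟨(A.filter (N · = j)).map (w · j), (B.filter (N · = j)).map (w · j), ?_, ?_, ?_⟩
  · simp [mlist, hAB, List.filter_append, hfilter A hiA, hfilter B hiB]
  · by_cases h : N i = j <;> simp [mlist, hAB, List.filter_append, h]
  · intro y hy
    simp only [List.mem_append, List.mem_map] at hy
    rcases hy with ⟨i', -, rfl⟩ | ⟨i', -, rfl⟩ <;> exact ⟨i', rfl⟩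

section Game

variable {n m : ℕ} {w : Fin n → Fin m → ℝ}

lemma mlist_pos (hw : ∀ i j, 0 < w i j) (N : Fin n → Fin m) (j : Fin m) :
    ∀ y ∈ mlist w N j, 0 < y := by
  intro y hy
  obtain ⟨i, -, rfl⟩ := List.mem_map.1 hy
  exact hw i j

lemma sum_mlist (N : Fin n → Fin m) (j : Fin m) : (mlist w N j).sum = load w N j := by
  simp [load, mlist, Finset.sum, Fin.univ_def]

lemma Psi_le_Phi (hw : ∀ i j, 0 < w i j) (p : ℕ) (N : Fin n → Fin m) (j : Fin m) :
    Psi (p + 1) (mlist w N j) ≤ Phi p w N :=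
  single_le_sum (f := fun j => Psi (p + 1) (mlist w N j))
    (fun j _ => Psi_nonneg _ fun y hy => (mlist_pos hw N j y hy).le) (mem_univ j)

lemma Phi_le (hw : ∀ i j, 0 < w i j) (p : ℕ) (O : Fin n → Fin m) {M : ℝ}
    (hM : ∀ j, load w O j ≤ M) : Phi p w O ≤ m * ((p + 1) * M) ^ (p + 1) := by
  have hj : ∀ j, Psi (p + 1) (mlist w O j) ≤ ((p + 1) * M) ^ (p + 1) := fun j => by
    have hl : ∀ y ∈ mlist w O j, 0 ≤ y := fun y hy => (mlist_pos hw O j y hy).le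
    calc Psi (p + 1) (mlist w O j) ≤ ((p + 1 : ℕ) * load w O j) ^ (p + 1) := by
          simpa only [sum_mlist] using Psi_le_mul_sum_pow (p + 1) hl
      _ ≤ ((p + 1) * M) ^ (p + 1) := by
          push_cast
          have := sum_mlist (w := w) O j ▸ List.sum_nonneg hl
          gcongr
          exact hM j
  calc Phi p w O ≤ ∑ _j : Fin m, ((p + 1) * M) ^ (p + 1) := sum_le_sum fun j _ => hj j
    _ = m * ((p + 1) * M) ^ (p + 1) := by simp

lemma Phi_rpow_le (hw : ∀ i j, 0 < w i j) (p : ℕ) (O : Fin n → Fin m) {M : ℝ} (hM₀ : 0 ≤ M)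
    (hM : ∀ j, load w O j ≤ M) :
    Phi p w O ^ ((1 : ℝ) / (p + 1)) ≤ (p + 1) * (m : ℝ) ^ ((1 : ℝ) / (p + 1)) * M := by
  have hΦ₀ : 0 ≤ Phi p w O :=
    sum_nonneg fun j _ => Psi_nonneg _ fun y hy => (mlist_pos hw O j y hy).le
  calc Phi p w O ^ ((1 : ℝ) / (p + 1))
      ≤ ((m : ℝ) * ((p + 1) * M) ^ (p + 1)) ^ ((1 : ℝ) / (p + 1)) := by
        gcongr; exact Phi_le hw p O hM
    _ = (m : ℝ) ^ ((1 : ℝ) / (p + 1)) * ((p + 1) * M) := by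
        rw [Real.mul_rpow (by positivity) (by positivity), one_div]
        congr 1
        exact_mod_cast Real.pow_rpow_inv_natCast (by positivity) p.succ_ne_zero
    _ = (p + 1) * (m : ℝ) ^ ((1 : ℝ) / (p + 1)) * M := by ring

lemma wmin_eq_of_forall_le {i : Fin n} {j : Fin m} (hj : ∀ j', w i j ≤ w i j') :
    wmin w i = w i j :=
  IsLeast.csInf_eq ⟨⟨j, rfl⟩, by rintro _ ⟨j', rfl⟩; exact hj j'⟩

lemma Ccost_le_of_isNashC (hw : ∀ i j, 0 < w i j) {p : ℕ} (hp : p ≠ 0) {N : Fin n → Fin m}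
    (hN : isNashC p w N) {i : Fin n} {j : Fin m} (hj : ∀ j', w i j ≤ w i j') :
    Ccost p w N i ≤ Phi p w N ^ ((1 : ℝ) / (p + 1)) + p * w i j := by
  obtain ⟨L₁, L₂, hupd, hmlist, hmem⟩ := exists_mlist_update w N i j
  have hL : ∀ y ∈ L₁ ++ L₂, 0 < y := fun y hy => by
    obtain ⟨i', rfl⟩ := hmem y hy
    exact hw i' j
  have hL' : ∀ y ∈ L₁ ++ L₂, 0 ≤ y := fun y hy => (hL y hy).le
  have hLx : ∀ y ∈ L₁ ++ w i j :: L₂, 0 ≤ y := by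
    rw [← hupd]; exact fun y hy => (mlist_pos hw _ j y hy).le
  have hrho : rho w i j = 1 := by rw [rho, wmin_eq_of_forall_le hj, div_self (hw i j).ne']
  have hdev : Ccost p w (Function.update N i j) i = Psi p (L₁ ++ w i j :: L₂) ^ ((1 : ℝ) / p) := by
    simp only [Ccost, Function.update_self, hrho, one_mul, hupd]
  have hPhi : Psi (p + 1) (L₁ ++ L₂) ≤ Phi p w N := by
    refine le_trans ?_ (Psi_le_Phi hw p N j)
    rw [hmlist]
    split_ifs
    exacts [Psi_le_Psi_append_cons _ (hw i j).le hL', le_rfl]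
  have hS : 0 ≤ Psi (p + 1) (L₁ ++ L₂) ^ ((1 : ℝ) / (p + 1)) :=
    Real.rpow_nonneg (Psi_nonneg _ hL') _
  calc Ccost p w N i ≤ Psi p (L₁ ++ w i j :: L₂) ^ ((1 : ℝ) / p) := hdev ▸ hN i j
    _ ≤ ((Psi (p + 1) (L₁ ++ L₂) ^ ((1 : ℝ) / (p + 1)) + p * w i j) ^ p) ^ ((1 : ℝ) / p) := by
        gcongr
        · exact Psi_nonneg _ hLx
        · exact Psi_append_cons_le p (hw i j).le hL
    _ = Psi (p + 1) (L₁ ++ L₂) ^ ((1 : ℝ) / (p + 1)) + p * w i j := by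
        rw [one_div (p : ℝ)]
        exact Real.pow_rpow_inv_natCast (add_nonneg hS (mul_nonneg p.cast_nonneg (hw i j).le)) hp
    _ ≤ Phi p w N ^ ((1 : ℝ) / (p + 1)) + p * w i j := by
        gcongr
        exact Psi_nonneg _ hL'

end Game

theorem stmt_16 (n m : ℕ) (p : ℕ) (hp : 1 ≤ p) (hm : 0 < m)
    (w : Fin n → Fin m → ℝ) (hw : ∀ i j, 0 < w i j)
    (N O : Fin n → Fin m) (hN : isNashC p w N)
    (γ : ℝ) (hγ : 0 ≤ γ)
    (hΦ : Phi p w N ^ ((1 : ℝ) / (p + 1)) ≤ γ * Phi p w O ^ ((1 : ℝ) / (p + 1))) :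
    ∀ i : Fin n, Ccost p w N i ≤
      (γ * (p + 1) * (m : ℝ) ^ ((1 : ℝ) / (p + 1)) + p) *
        Finset.univ.sup' ⟨⟨0, hm⟩, Finset.mem_univ _⟩ (load w O) := by
  intro i
  set M := Finset.univ.sup' ⟨⟨0, hm⟩, Finset.mem_univ _⟩ (load w O)
  have hM : ∀ j, load w O j ≤ M := fun j => le_sup' (load w O) (mem_univ j)
  have hload : ∀ j, 0 ≤ load w O j := fun j => sum_nonneg fun i' _ => (hw i' j).le
  obtain ⟨j, -, hj⟩ := exists_min_image univ (w i) ⟨⟨0, hm⟩, mem_univ _⟩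
  have hwM : w i j ≤ M := calc
    w i j ≤ w i (O i) := hj (O i) (mem_univ _)
    _ ≤ load w O (O i) := single_le_sum (fun i' _ => (hw i' (O i)).le) (by simp)
    _ ≤ M := hM (O i)
  calc Ccost p w N i
      ≤ Phi p w N ^ ((1 : ℝ) / (p + 1)) + p * w i j :=
        Ccost_le_of_isNashC hw (by omega) hN fun j' => hj j' (mem_univ j')
    _ ≤ γ * ((p + 1) * (m : ℝ) ^ ((1 : ℝ) / (p + 1)) * M) + p * M := by
        gcongr
        exact hΦ.trans (by gcongr; exact Phi_rpow_le hw p O ((hload j).trans (hM j)) hM)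
    _ = (γ * (p + 1) * (m : ℝ) ^ ((1 : ℝ) / (p + 1)) + p) * M := by ring
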